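/- arXiv:1908.07104 — 3 statements merged into one kernel-verified Lean document; each statement's English description precedes it below -/
import Mathlib

section
/- The ternary Golay code 𝒢 has minimum distance 5: every nonzero codeword of 𝒢 has Hamming weight at least 5, and there exists a codeword of 𝒢 of Hamming weight exactly 5. -/
/-!
The first six shifts already span `Golay`: reading `gVec` as a polynomial `g`, the polynomial
`h = x⁶ + x⁴ - x³ - x² - x + 1` satisfies `h * g ≡ 0 mod x¹¹ - 1`, so every shift `x ^ k * g`
equals `(x ^ k mod h) * g`. The weight bound is then a finite check over the `3 ^ 6`
coefficient vectors, and `gShift 4 + gShift 5` is a codeword of weight exactly `5`.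
-/

/-- The generating vector `(−1,+1,−1,+1,+1,+1,−1,−1,−1,+1,−1)` over `𝔽₃`. -/
def gVec : Fin 11 → ZMod 3 := ![-1, 1, -1, 1, 1, 1, -1, -1, -1, 1, -1]

/-- The `k`-th cyclic shift of `gVec`. -/
def gShift (k : Fin 11) : Fin 11 → ZMod 3 := fun i => gVec (i - k)

/-- The ternary Golay code: the `𝔽₃`-linear span of the 11 cyclic shifts of `gVec`. -/
def Golay : Submodule (ZMod 3) (Fin 11 → ZMod 3) :=
  Submodule.span (ZMod 3) (Set.range gShift)

def gShiftLow (i : Fin 6) : Fin 11 → ZMod 3 := gShift (Fin.castLE (by norm_num) i)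

/-- Row `k` holds the coefficients of `x ^ k mod h`. -/
def gShiftCoeff : Fin 11 → Fin 6 → ZMod 3 :=
  ![![1, 0, 0, 0, 0, 0], ![0, 1, 0, 0, 0, 0], ![0, 0, 1, 0, 0, 0], ![0, 0, 0, 1, 0, 0],
    ![0, 0, 0, 0, 1, 0], ![0, 0, 0, 0, 0, 1], ![2, 1, 1, 1, 2, 0], ![0, 2, 1, 1, 1, 2],
    ![1, 2, 1, 0, 2, 1], ![2, 2, 0, 2, 2, 2], ![1, 1, 1, 2, 0, 2]]

lemma gShift_eq_sum_gShiftLow (k : Fin 11) :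
    gShift k = ∑ i, gShiftCoeff k i • gShiftLow i := by
  revert k; decide

lemma golay_le_span_gShiftLow : Golay ≤ Submodule.span (ZMod 3) (Set.range gShiftLow) := by
  rw [Golay, Submodule.span_le]
  rintro _ ⟨k, rfl⟩
  exact (Submodule.mem_span_range_iff_exists_fun _).mpr
    ⟨gShiftCoeff k, (gShift_eq_sum_gShiftLow k).symm⟩

set_option maxRecDepth 10000 in
set_option maxHeartbeats 4000000 in
lemma five_le_hammingNorm_sum_gShiftLow (a : Fin 6 → ZMod 3)
    (ha : ∑ i, a i • gShiftLow i ≠ 0) : 5 ≤ hammingNorm (∑ i, a i • gShiftLow i) := by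
  revert a; decide

lemma gShift_four_add_gShift_five_mem_golay : gShift 4 + gShift 5 ∈ Golay :=
  Golay.add_mem (Submodule.subset_span ⟨4, rfl⟩) (Submodule.subset_span ⟨5, rfl⟩)

lemma hammingNorm_gShift_four_add_gShift_five : hammingNorm (gShift 4 + gShift 5) = 5 := by
  decide

theorem stmt1 :
    (∀ c ∈ Golay, c ≠ 0 → 5 ≤ hammingNorm c) ∧
    (∃ c ∈ Golay, hammingNorm c = 5) := by
  refine ⟨fun c hc hne => ?_, ⟨_, gShift_four_add_gShift_five_mem_golay,
    hammingNorm_gShift_four_add_gShift_five⟩⟩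
  obtain ⟨a, rfl⟩ := (Submodule.mem_span_range_iff_exists_fun _).mp (golay_le_span_gShiftLow hc)
  exact five_le_hammingNorm_sum_gShiftLow a hne
end

section
/- The shortened ternary Golay code 𝒢′ = {(c₁,…,c₁₀) ∈ 𝔽₃¹⁰ : (0,c₁,…,c₁₀) ∈ 𝒢} is a 5-dimensional 𝔽₃-subspace of 𝔽₃¹⁰, and every nonzero codeword of 𝒢′ has Hamming weight at least 5. -/
def Shortened : Submodule (ZMod 3) (Fin 10 → ZMod 3) where
  carrier := {c | (Fin.cons 0 c : Fin 11 → ZMod 3) ∈ Golay}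
  zero_mem' := by
    have h : (Fin.cons 0 (0 : Fin 10 → ZMod 3) : Fin 11 → ZMod 3) = 0 := by
      funext i; refine Fin.cases ?_ ?_ i <;> simp
    simp only [Set.mem_setOf_eq, h]
    exact Golay.zero_mem
  add_mem' := by
    intro a b ha hb
    have h : (Fin.cons 0 (a + b) : Fin 11 → ZMod 3) =
        (Fin.cons 0 a : Fin 11 → ZMod 3) + (Fin.cons 0 b : Fin 11 → ZMod 3) := by
      funext i; refine Fin.cases ?_ ?_ i <;> simp
    simp only [Set.mem_setOf_eq, h]
    exact Golay.add_mem ha hb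
  smul_mem' := by
    intro t a ha
    have h : (Fin.cons 0 (t • a) : Fin 11 → ZMod 3) =
        t • (Fin.cons 0 a : Fin 11 → ZMod 3) := by
      funext i; refine Fin.cases ?_ ?_ i <;> simp
    simp only [Set.mem_setOf_eq, h]
    exact Golay.smul_mem t ha

section Systematic

variable {R : Type*} [CommRing R] {k n : ℕ}

lemma sum_smul_apply_of_pivot (v : Fin k → Fin n → R) (e : Fin k → Fin n)
    (hv : ∀ i j, v i (e j) = if i = j then 1 else 0) (x : Fin k → R) (j : Fin k) :
    (∑ i, x i • v i) (e j) = x j := by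
  simp [Finset.sum_apply, hv]

lemma linearIndependent_of_pivot (v : Fin k → Fin n → R) (e : Fin k → Fin n)
    (hv : ∀ i j, v i (e j) = if i = j then 1 else 0) : LinearIndependent R v :=
  Fintype.linearIndependent_iff.mpr fun x hx j => by
    rw [← sum_smul_apply_of_pivot v e hv x j, hx, Pi.zero_apply]

lemma cons_zero_mem_span_iff (r : Fin (k + 1) → Fin (n + 1) → R)
    (hr : ∀ i, r i 0 = if i = 0 then 1 else 0) (c : Fin n → R) :
    (Fin.cons 0 c : Fin (n + 1) → R) ∈ Submodule.span R (Set.range r) ↔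
      c ∈ Submodule.span R (Set.range fun i : Fin k => Fin.tail (r i.succ)) := by
  simp only [Submodule.mem_span_range_iff_exists_fun]
  constructor
  · rintro ⟨x, hx⟩
    have hx0 : x 0 = 0 := by
      simpa [Finset.sum_apply, hr] using congrFun hx 0
    refine ⟨fun i => x i.succ, funext fun j => ?_⟩
    simpa [Finset.sum_apply, Fin.sum_univ_succ, hx0, Fin.tail] using congrFun hx j.succ
  · rintro ⟨y, hy⟩
    refine ⟨Fin.cons 0 y, funext fun j => ?_⟩
    refine Fin.cases ?_ (fun j => ?_) j
    · simp [Finset.sum_apply, hr]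
    · simpa [Finset.sum_apply, Fin.sum_univ_succ, Fin.tail] using congrFun hy j

end Systematic

def golayRow : Fin 6 → Fin 11 → ZMod 3 :=
  ![![1, 0, 0, 0, 0, 0, 2, 2, 1, 2, 0],
    ![0, 1, 0, 0, 0, 0, 0, 2, 2, 1, 2],
    ![0, 0, 1, 0, 0, 0, 2, 2, 0, 1, 1],
    ![0, 0, 0, 1, 0, 0, 1, 0, 1, 1, 1],
    ![0, 0, 0, 0, 1, 0, 1, 2, 2, 2, 1],
    ![0, 0, 0, 0, 0, 1, 1, 2, 1, 0, 2]]

def shortenedRow (i : Fin 5) : Fin 10 → ZMod 3 := Fin.tail (golayRow i.succ)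

lemma golayRow_mem_golay (i : Fin 6) : golayRow i ∈ Golay := by
  rw [Golay, Submodule.mem_span_range_iff_exists_fun]
  -- coefficients found by Gaussian elimination on the shifts `gShift 0, …, gShift 5`
  refine ⟨![![2, 0, 1, 0, 2, 2, 0, 0, 0, 0, 0],
    ![1, 1, 2, 0, 1, 2, 0, 0, 0, 0, 0],
    ![0, 0, 1, 1, 0, 0, 0, 0, 0, 0, 0],
    ![1, 0, 2, 1, 2, 1, 0, 0, 0, 0, 0],
    ![0, 2, 0, 0, 1, 0, 0, 0, 0, 0, 0],
    ![1, 0, 1, 0, 1, 2, 0, 0, 0, 0, 0]] i, ?_⟩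
  revert i
  decide

lemma gShift_mem_span_golayRow (k : Fin 11) :
    gShift k ∈ Submodule.span (ZMod 3) (Set.range golayRow) := by
  rw [Submodule.mem_span_range_iff_exists_fun]
  -- a systematic generator matrix expresses a codeword through its entries on the pivots
  refine ⟨fun i => gShift k (Fin.castLE (by omega) i), ?_⟩
  revert k
  decide

lemma golay_eq_span_golayRow : Golay = Submodule.span (ZMod 3) (Set.range golayRow) :=
  Submodule.span_eq_span (Set.range_subset_iff.mpr gShift_mem_span_golayRow)
    (Set.range_subset_iff.mpr golayRow_mem_golay)

lemma shortened_eq_span_shortenedRow :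
    Shortened = Submodule.span (ZMod 3) (Set.range shortenedRow) := by
  ext c
  show (Fin.cons 0 c : Fin 11 → ZMod 3) ∈ Golay ↔ _
  rw [golay_eq_span_golayRow]
  exact cons_zero_mem_span_iff golayRow (by decide) c

lemma shortenedRow_pivot (i j : Fin 5) :
    shortenedRow i (Fin.castLE (by omega) j) = if i = j then 1 else 0 := by
  revert i j
  decide

set_option maxRecDepth 10000 in
lemma five_le_hammingNorm_sum_smul_shortenedRow (x : Fin 5 → ZMod 3)
    (hx : ∑ i, x i • shortenedRow i ≠ 0) : 5 ≤ hammingNorm (∑ i, x i • shortenedRow i) := by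
  revert x
  decide

theorem stmt11 :
    Module.finrank (ZMod 3) Shortened = 5 ∧
    ∀ c ∈ Shortened, c ≠ 0 → 5 ≤ hammingNorm c := by
  rw [shortened_eq_span_shortenedRow]
  constructor
  · simpa using finrank_span_eq_card
      (linearIndependent_of_pivot shortenedRow _ shortenedRow_pivot)
  · intro c hc hne
    obtain ⟨x, rfl⟩ := Submodule.mem_span_range_iff_exists_fun _ |>.mp hc
    exact five_le_hammingNorm_sum_smul_shortenedRow x hne
end

section
/- Let Λ′ be the simple graph on the 243 cosets of the ternary Golay code 𝒢 in 𝔽₃¹¹, where two distinct cosets 𝒢 + x and 𝒢 + y are adjacent if and only if the coset 𝒢 + (y − x) contains a vector of Hamming weight 1 whose unique nonzero coordinate is not coordinate 0. Then Λ′ is isomorphic to the coset graph of the shortened ternary Golay code 𝒢′ ⊆ 𝔽₃¹⁰. -/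
/-- The coset graph of a linear code `C ⊆ 𝔽₃ⁿ`: vertices are the cosets of `C`, with two
distinct cosets adjacent iff they contain representatives at Hamming distance 1. -/
def CosetGraph {n : ℕ} (C : Submodule (ZMod 3) (Fin n → ZMod 3)) :
    SimpleGraph ((Fin n → ZMod 3) ⧸ C) :=
  SimpleGraph.fromRel fun X Y =>
    ∃ x y : Fin n → ZMod 3,
      (Submodule.Quotient.mk x : (Fin n → ZMod 3) ⧸ C) = X ∧
      (Submodule.Quotient.mk y : (Fin n → ZMod 3) ⧸ C) = Y ∧
      hammingDist x y = 1

/-- The graph `Λ′` on the cosets of the ternary Golay code `𝒢`, where distinct cosets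
`𝒢 + x` and `𝒢 + y` are adjacent iff `𝒢 + (y - x)` contains a vector of Hamming weight 1
whose unique nonzero coordinate is not coordinate `0`. -/
def LambdaPrime : SimpleGraph ((Fin 11 → ZMod 3) ⧸ Golay) :=
  SimpleGraph.fromRel fun C D =>
    ∃ v : Fin 11 → ZMod 3, hammingNorm v = 1 ∧ v 0 = 0 ∧
      (Submodule.Quotient.mk v : (Fin 11 → ZMod 3) ⧸ Golay) = D - C

/-! Coordinate 0 of the Golay code is not identically zero (`gShift 0` has entry `-1` there), so
every coset of `𝒢` has a representative vanishing at coordinate 0. Hence prepending a zero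
coordinate induces a linear isomorphism `𝔽₃¹⁰ ⧸ 𝒢′ ≃ 𝔽₃¹¹ ⧸ 𝒢`, and under it the weight-one
vectors of `𝔽₃¹⁰` correspond exactly to the weight-one vectors of `𝔽₃¹¹` vanishing at
coordinate 0, which are the connection set of `Λ′`. -/

open Submodule

section Shortening

variable {K : Type*} {n : ℕ}

def consZero [Semiring K] : (Fin n → K) →ₗ[K] (Fin (n + 1) → K) :=
  (Fin.consLinearEquiv K fun _ => K).toLinearMap ∘ₗ LinearMap.inr K K _

lemma hammingNorm_cons_zero [Zero K] [DecidableEq K] (w : Fin n → K) :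
    hammingNorm (Fin.cons 0 w : Fin (n + 1) → K) = hammingNorm w := by
  simp only [hammingNorm, Finset.card_filter, Fin.sum_univ_succ, Fin.cons_zero, Fin.cons_succ,
    ne_eq, not_true_eq_false, if_false, zero_add]

variable [Ring K] (C : Submodule K (Fin (n + 1) → K))

def shortenQ : ((Fin n → K) ⧸ C.comap consZero) →ₗ[K] (Fin (n + 1) → K) ⧸ C :=
  (C.comap consZero).mapQ C consZero le_rfl

lemma shortenQ_mk (w : Fin n → K) :
    shortenQ C (Submodule.Quotient.mk w) = Submodule.Quotient.mk (Fin.cons 0 w) :=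
  rfl

lemma shortenQ_injective : Function.Injective (shortenQ C) :=
  LinearMap.ker_eq_bot.mp <| by rw [shortenQ, ker_mapQ, mkQ_map_self]

lemma exists_hammingNorm_eq_one_mk_eq_shortenQ_iff [DecidableEq K]
    (Z : (Fin n → K) ⧸ C.comap consZero) :
    (∃ v : Fin (n + 1) → K,
        hammingNorm v = 1 ∧ v 0 = 0 ∧ Submodule.Quotient.mk v = shortenQ C Z) ↔
      ∃ w : Fin n → K, hammingNorm w = 1 ∧ Submodule.Quotient.mk w = Z := by
  constructor
  · rintro ⟨v, hv1, hv0, hvZ⟩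
    have hv : Fin.cons 0 (Fin.tail v) = v := hv0 ▸ Fin.cons_self_tail v
    refine ⟨Fin.tail v, by rwa [← hammingNorm_cons_zero, hv], shortenQ_injective C ?_⟩
    rwa [shortenQ_mk, hv]
  · rintro ⟨w, hw1, rfl⟩
    exact ⟨Fin.cons 0 w, by rwa [hammingNorm_cons_zero], Fin.cons_zero _ _, rfl⟩

end Shortening

lemma shortenQ_surjective {K : Type*} [DivisionRing K] {n : ℕ}
    (C : Submodule K (Fin (n + 1) → K)) {c : Fin (n + 1) → K} (hc : c ∈ C) (hc0 : c 0 ≠ 0) :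
    Function.Surjective (shortenQ C) := by
  intro V
  obtain ⟨v, rfl⟩ := Submodule.Quotient.mk_surjective C V
  set u := v - (v 0 * (c 0)⁻¹) • c
  have hu0 : u 0 = 0 := by simp [u, inv_mul_cancel_right₀ hc0]
  refine ⟨Submodule.Quotient.mk (Fin.tail u), ?_⟩
  rw [shortenQ_mk, ← hu0, Fin.cons_self_tail, Submodule.Quotient.eq]
  simpa [u] using C.smul_mem _ hc

lemma exists_mk_eq_hammingDist_eq_one_iff {ι K : Type*} [Fintype ι] [Ring K] [DecidableEq K]
    {C : Submodule K (ι → K)} (X Y : (ι → K) ⧸ C) :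
    (∃ x y : ι → K,
        Submodule.Quotient.mk x = X ∧ Submodule.Quotient.mk y = Y ∧ hammingDist x y = 1) ↔
      ∃ w : ι → K, hammingNorm w = 1 ∧ Submodule.Quotient.mk w = Y - X := by
  constructor
  · rintro ⟨x, y, rfl, rfl, hxy⟩
    exact ⟨y - x, by rwa [hammingDist_eq_hammingNorm, neg_add_eq_sub] at hxy, rfl⟩
  · rintro ⟨w, hw1, hwXY⟩
    obtain ⟨x, rfl⟩ := Submodule.Quotient.mk_surjective C X
    refine ⟨x, x + w, rfl, by rw [Submodule.Quotient.mk_add, hwXY, add_sub_cancel], ?_⟩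
    rwa [hammingDist_eq_hammingNorm, neg_add_cancel_left]

lemma shortened_eq_comap_consZero : Shortened = Golay.comap consZero := rfl

lemma gShift_zero_mem_golay : gShift 0 ∈ Golay := subset_span ⟨0, rfl⟩

theorem stmt14 : Nonempty (LambdaPrime ≃g CosetGraph Shortened) := by
  rw [shortened_eq_comap_consZero]
  have hbij : Function.Bijective (shortenQ Golay) :=
    ⟨shortenQ_injective Golay, shortenQ_surjective Golay gShift_zero_mem_golay (by decide)⟩
  refine ⟨SimpleGraph.Iso.symm ⟨Equiv.ofBijective _ hbij, fun {X Y} => ?_⟩⟩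
  show LambdaPrime.Adj (shortenQ Golay X) (shortenQ Golay Y) ↔ _
  simp only [LambdaPrime, CosetGraph, SimpleGraph.fromRel_adj, exists_mk_eq_hammingDist_eq_one_iff,
    ← map_sub, exists_hammingNorm_eq_one_mk_eq_shortenQ_iff, hbij.injective.ne_iff]
end
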